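/- arXiv:2108.05555 — 2 statements merged into one kernel-verified Lean document; each statement's English description precedes it below -/
import Mathlib

section
/- Let S be a finite state space, Θ ⊆ ℝ a parameter set, and suppose the transition matrices P_θ(a,b) = κ(a,b) exp(η(θ) τ(a,b) − ψ(θ)) define a Markovian exponential family with scalar statistic τ : S × S → ℝ, carrier κ : S × S → (0, ∞), a shared log-partition function ψ(θ) (independent of the row a), and each P_θ stochastic. If the identity ∑_b κ(a,b) e^{η τ(a,b)} = ∑_b κ(c,b) e^{η τ(c,b)} holds for all η in a set with a nonzero accumulation point, then for all a, c ∈ S the sets of row values coincide: {τ(a,b) : b ∈ S} = {τ(c,b) : b ∈ S}. -/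
open Real Filter Finset Topology

/-- The monoid hom `Multiplicative ℝ →* ℝ`, `η ↦ exp (t * η)`. -/
noncomputable def expHom (t : ℝ) : Multiplicative ℝ →* ℝ where
  toFun η := Real.exp (t * Multiplicative.toAdd η)
  map_one' := by simp
  map_mul' x y := by
    simp [toAdd_mul, mul_add, Real.exp_add]

lemma expHom_injective : Function.Injective expHom := by
  intro s t h
  have := congrArg (fun f : Multiplicative ℝ →* ℝ => f (Multiplicative.ofAdd 1)) h
  simpa [expHom] using Real.exp_injective this

/-- Linear independence step: if a finite combination of exponentials vanishes as a
function, all coefficients vanish. -/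
lemma coeff_zero (T : Finset ℝ) (w : ℝ → ℝ)
    (h : ∀ η : ℝ, ∑ t ∈ T, w t * Real.exp (t * η) = 0) :
    ∀ t ∈ T, w t = 0 := by
  have li : LinearIndependent ℝ (fun t : ℝ => ((expHom t : Multiplicative ℝ →* ℝ) :
      Multiplicative ℝ → ℝ)) :=
    (linearIndependent_monoidHom (Multiplicative ℝ) ℝ).comp expHom expHom_injective
  have := linearIndependent_iff'.1 li T w ?_
  · exact this
  · funext η
    have := h (Multiplicative.toAdd η)
    simpa [expHom, Finset.sum_apply] using this

theorem sub_aux {S : Type*} [Fintype S] (κ : S → S → ℝ) (τ : S → S → ℝ)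
    (hκ : ∀ a b : S, 0 < κ a b) (a c : S)
    (heq : ∀ η : ℝ, ∑ b : S, κ a b * Real.exp (η * τ a b)
        = ∑ b : S, κ c b * Real.exp (η * τ c b)) :
    Set.range (τ a) ⊆ Set.range (τ c) := by
  classical
  set T : Finset ℝ := (Finset.univ.image (τ a)) ∪ (Finset.univ.image (τ c)) with hT
  set w : ℝ → ℝ := fun t =>
    (∑ b ∈ Finset.univ.filter (fun b => τ a b = t), κ a b)
      - (∑ b ∈ Finset.univ.filter (fun b => τ c b = t), κ c b) with hw
  have key : ∀ t ∈ T, w t = 0 := by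
    apply coeff_zero
    intro η
    have grpa : ∑ t ∈ T, (∑ b ∈ Finset.univ.filter (fun b => τ a b = t), κ a b)
        * Real.exp (t * η) = ∑ b : S, κ a b * Real.exp (τ a b * η) := by
      rw [← Finset.sum_fiberwise_of_maps_to (g := τ a)
        (fun b _ => Finset.mem_union_left _ (Finset.mem_image_of_mem _ (Finset.mem_univ b)))
        (fun b => κ a b * Real.exp (τ a b * η))]
      refine Finset.sum_congr rfl fun t _ => ?_
      rw [Finset.sum_mul]
      refine Finset.sum_congr rfl fun b hb => ?_
      rw [(Finset.mem_filter.1 hb).2]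
    have grpc : ∑ t ∈ T, (∑ b ∈ Finset.univ.filter (fun b => τ c b = t), κ c b)
        * Real.exp (t * η) = ∑ b : S, κ c b * Real.exp (τ c b * η) := by
      rw [← Finset.sum_fiberwise_of_maps_to (g := τ c)
        (fun b _ => Finset.mem_union_right _ (Finset.mem_image_of_mem _ (Finset.mem_univ b)))
        (fun b => κ c b * Real.exp (τ c b * η))]
      refine Finset.sum_congr rfl fun t _ => ?_
      rw [Finset.sum_mul]
      refine Finset.sum_congr rfl fun b hb => ?_
      rw [(Finset.mem_filter.1 hb).2]
    have := heq η
    simp only [hw, sub_mul, Finset.sum_sub_distrib, grpa, grpc]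
    simp only [mul_comm η] at this
    rw [this, sub_self]
  rintro t ⟨b₀, rfl⟩
  have htT : τ a b₀ ∈ T := Finset.mem_union_left _ (Finset.mem_image_of_mem _ (Finset.mem_univ b₀))
  have hw0 := key _ htT
  have hpos : 0 < ∑ b ∈ Finset.univ.filter (fun b => τ a b = τ a b₀), κ a b :=
    Finset.sum_pos (fun b _ => hκ a b) ⟨b₀, by simp⟩
  have hcpos : 0 < ∑ b ∈ Finset.univ.filter (fun b => τ c b = τ a b₀), κ c b := by
    have : (∑ b ∈ Finset.univ.filter (fun b => τ c b = τ a b₀), κ c b)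
        = ∑ b ∈ Finset.univ.filter (fun b => τ a b = τ a b₀), κ a b := by
      have := sub_eq_zero.1 hw0
      linarith [this]
    rw [this]; exact hpos
  obtain ⟨b₁, hb₁⟩ := Finset.nonempty_of_sum_ne_zero (ne_of_gt hcpos)
  exact ⟨b₁, (Finset.mem_filter.1 hb₁).2⟩

/-- For a Markovian exponential family on a finite state space, with positive carrier
`κ` and the partition identity `∑ b, κ a b * exp (η * τ a b) = ∑ b, κ c b * exp (η * τ c b)`
holding for all `η` in a set with a nonzero accumulation point, the sets of row values
of the sufficient statistic coincide across rows. -/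
theorem stmt_9 {S : Type*} [Fintype S] (κ : S → S → ℝ) (τ : S → S → ℝ)
    (hκ : ∀ a b : S, 0 < κ a b) (E : Set ℝ)
    (hacc : ∃ x : ℝ, x ≠ 0 ∧ AccPt x (Filter.principal E))
    (hpart : ∀ η ∈ E, ∀ a c : S,
      ∑ b : S, κ a b * Real.exp (η * τ a b) = ∑ b : S, κ c b * Real.exp (η * τ c b)) :
    ∀ a c : S, Set.range (τ a) = Set.range (τ c) := by
  classical
  obtain ⟨x, hx0, hxacc⟩ := hacc
  -- extend the identity to all of ℝ via the identity theorem for analytic functions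
  have heq : ∀ a c : S, ∀ η : ℝ, ∑ b : S, κ a b * Real.exp (η * τ a b)
      = ∑ b : S, κ c b * Real.exp (η * τ c b) := by
    intro a c
    set f : ℝ → ℝ := fun η => (∑ b : S, κ a b * Real.exp (η * τ a b))
      - ∑ b : S, κ c b * Real.exp (η * τ c b) with hf
    have han : AnalyticOnNhd ℝ f Set.univ := by
      intro z _
      apply AnalyticAt.sub
      · exact Finset.analyticAt_fun_sum _ fun b _ =>
          (analyticAt_const).mul ((analyticAt_id.mul analyticAt_const).rexp)
      · exact Finset.analyticAt_fun_sum _ fun b _ =>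
          (analyticAt_const).mul ((analyticAt_id.mul analyticAt_const).rexp)
    have hfreq : ∃ᶠ z in nhdsWithin x {x}ᶜ, f z = 0 := by
      have h1 : (𝓝[≠] x ⊓ Filter.principal E).NeBot := hxacc
      have : ∃ᶠ z in 𝓝[≠] x, z ∈ E := Filter.frequently_mem_iff_neBot.2 h1
      refine this.mono fun z hz => ?_
      simp only [hf, sub_eq_zero]
      exact hpart z hz a c
    have := han.eqOn_zero_of_preconnected_of_frequently_eq_zero isPreconnected_univ
      (Set.mem_univ x) hfreq
    intro η
    have := this (Set.mem_univ η)
    simpa [hf, sub_eq_zero] using this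
  intro a c
  apply Set.Subset.antisymm
  · exact sub_aux κ τ hκ a c (heq a c)
  · exact sub_aux κ τ hκ c a (heq c a)
end

section
/- Let X = (X_t)_{t∈ℕ} be a time-homogeneous Markov chain on a countable state space S with transition matrix P that is permutation-uniform under permutations σ = {σ_a}_{a∈S}, so that P(a,b) = μ(σ_a b) for a PMF μ on S. Define Z_t := σ_{X_{t−1}}(X_t) for t ≥ 1. Then the random variables Z_1, Z_2, … are independent and identically distributed with common law μ, and conversely X_t = σ_{X_{t−1}}⁻¹(Z_t), so that X is measurably determined by X_0 and the sequence Z. -/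
open MeasureTheory
open scoped ENNReal

/-- For a Markov chain `X` on a countable state space whose transition matrix is
permutation-uniform, `P a b = μ (σ a b)`, the variables `Z t := σ (X (t-1)) (X t)`
(`t ≥ 1`) are iid with common law `μ`, and `X` is recovered from `X 0` and `Z` via
`X t = (σ (X (t-1)))⁻¹ (Z t)`. -/
theorem stmt_11 {S : Type*} [Countable S] [MeasurableSpace S] [MeasurableSingletonClass S]
    {Ω : Type*} [MeasurableSpace Ω] (Pr : Measure Ω) [IsProbabilityMeasure Pr]
    (X : ℕ → Ω → S) (hmeas : ∀ t, Measurable (X t))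
    (P : S → S → ℝ≥0∞) (μ : S → ℝ≥0∞) (hμ : ∑' b : S, μ b = 1)
    (σ : S → Equiv.Perm S) (hunif : ∀ a b : S, P a b = μ (σ a b))
    (hMarkov : ∀ (t : ℕ) (x : ℕ → S),
      Pr {ω | ∀ i ∈ Finset.range (t + 1), X i ω = x i}
        = Pr {ω | X 0 ω = x 0} * ∏ i ∈ Finset.range t, P (x i) (x (i + 1)))
    (Z : ℕ → Ω → S) (hZ : ∀ (t : ℕ) (ω : Ω), Z (t + 1) ω = σ (X t ω) (X (t + 1) ω)) :
    -- identically distributed with common law μ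
    (∀ (t : ℕ) (c : S), Pr {ω | Z (t + 1) ω = c} = μ c) ∧
    -- independence: joint distribution factorizes
    (∀ (n : ℕ) (z : Fin n → S),
      Pr {ω | ∀ i : Fin n, Z (i + 1) ω = z i} = ∏ i : Fin n, μ (z i)) ∧
    -- X is determined by X 0 and Z
    (∀ (t : ℕ) (ω : Ω), X (t + 1) ω = (σ (X t ω)).symm (Z (t + 1) ω)) := by
  classical
  -- S is nonempty (else μ could not sum to 1)
  have hne : Nonempty S := by
    by_contra h
    rw [not_nonempty_iff] at h
    rw [tsum_empty] at hμ
    exact zero_ne_one hμ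
  inhabit S
  -- Z (t+1) is measurable
  have hZmeas : ∀ t : ℕ, Measurable (Z (t + 1)) := by
    intro t
    have h1 : Measurable (fun p : S × S => σ p.1 p.2) := measurable_of_countable _
    have h2 : Z (t + 1) = (fun p : S × S => σ p.1 p.2) ∘ (fun ω => (X t ω, X (t + 1) ω)) := by
      funext ω; exact hZ t ω
    rw [h2]
    exact h1.comp ((hmeas t).prodMk (hmeas (t + 1)))
  -- the law of X 0 sums to 1
  have hX0 : ∑' a : S, Pr {ω | X 0 ω = a} = 1 := by
    have hdis : Pairwise (Function.onFun Disjoint fun a : S => {ω | X 0 ω = a}) := by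
      intro a b hab
      rw [Function.onFun, Set.disjoint_left]
      intro ω h1 h2
      exact hab ((h1 : X 0 ω = a) ▸ (h2 : X 0 ω = b))
    rw [← measure_iUnion hdis (fun a => hmeas 0 (measurableSet_singleton a))]
    have hcov : (⋃ a : S, {ω | X 0 ω = a}) = Set.univ := by
      ext ω; simp
    rw [hcov, measure_univ]
  -- the key joint-distribution lemma
  have keyA : ∀ (n : ℕ) (z : Fin n → S),
      Pr {ω | ∀ i : Fin n, Z (↑i + 1) ω = z i} = ∏ i : Fin n, μ (z i) := by
    intro n z
    -- extend z to ℕ with junk values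
    set zf : ℕ → S := fun i => if h : i < n then z ⟨i, h⟩ else default with hzf
    -- the deterministic trajectory started at a
    set traj : S → ℕ → S := fun a i =>
      Nat.rec a (fun j xj => (σ xj).symm (zf j)) i with htraj
    have traj0 : ∀ a, traj a 0 = a := fun a => rfl
    have trajS : ∀ a i, traj a (i + 1) = (σ (traj a i)).symm (zf i) := fun a i => rfl
    have hzfz : ∀ i : Fin n, zf ↑i = z i := by
      intro i; simp only [hzf]; rw [dif_pos i.isLt]
    -- the trajectory events
    have hunion : {ω | ∀ i : Fin n, Z (↑i + 1) ω = z i}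
        = ⋃ a : S, {ω | ∀ i ∈ Finset.range (n + 1), X i ω = traj a i} := by
      ext ω
      simp only [Set.mem_iUnion, Set.mem_setOf_eq]
      constructor
      · intro hω
        refine ⟨X 0 ω, ?_⟩
        intro i hi
        rw [Finset.mem_range] at hi
        induction i with
        | zero => rfl
        | succ j ih =>
          have hj : j < n := Nat.lt_of_succ_lt_succ hi
          have hXj : X j ω = traj (X 0 ω) j := ih (Nat.lt_of_succ_lt hi)
          rw [trajS, ← hXj, Equiv.eq_symm_apply, ← hZ j ω]
          have hzj : Z (j + 1) ω = z ⟨j, hj⟩ := hω ⟨j, hj⟩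
          rw [hzj, ← hzfz ⟨j, hj⟩]
      · rintro ⟨a, ha⟩ i
        have h1 : X (↑i) ω = traj a ↑i :=
          ha _ (Finset.mem_range.mpr (Nat.lt_succ_of_lt i.isLt))
        have h2 : X (↑i + 1) ω = traj a (↑i + 1) :=
          ha _ (Finset.mem_range.mpr (Nat.succ_lt_succ i.isLt))
        rw [hZ ↑i ω, h1, h2, trajS, Equiv.apply_symm_apply, hzfz]
    have hFmeas : ∀ a : S,
        MeasurableSet {ω | ∀ i ∈ Finset.range (n + 1), X i ω = traj a i} := by
      intro a
      have : {ω | ∀ i ∈ Finset.range (n + 1), X i ω = traj a i}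
          = ⋂ i ∈ Finset.range (n + 1), X i ⁻¹' {traj a i} := by
        ext ω; simp [Set.mem_iInter]
      rw [this]
      exact MeasurableSet.biInter (Finset.range (n + 1)).countable_toSet
        (fun i _ => hmeas i (measurableSet_singleton _))
    have hFdis : Pairwise (Function.onFun Disjoint
        fun a : S => {ω | ∀ i ∈ Finset.range (n + 1), X i ω = traj a i}) := by
      intro a b hab
      rw [Function.onFun, Set.disjoint_left]
      intro ω h1 h2
      have ha' : X 0 ω = a := h1 0 (Finset.mem_range.mpr (Nat.succ_pos n))
      have hb' : X 0 ω = b := h2 0 (Finset.mem_range.mpr (Nat.succ_pos n))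
      exact hab (ha' ▸ hb')
    have hPrF : ∀ a : S,
        Pr {ω | ∀ i ∈ Finset.range (n + 1), X i ω = traj a i}
          = Pr {ω | X 0 ω = a} * ∏ i : Fin n, μ (z i) := by
      intro a
      rw [hMarkov n (traj a)]
      congr 1
      calc ∏ i ∈ Finset.range n, P (traj a i) (traj a (i + 1))
          = ∏ i ∈ Finset.range n, μ (zf i) := by
            refine Finset.prod_congr rfl fun i _ => ?_
            rw [hunif, trajS, Equiv.apply_symm_apply]
        _ = ∏ i : Fin n, μ (z i) := by
            rw [← Fin.prod_univ_eq_prod_range (fun i => μ (zf i)) n]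
            exact Finset.prod_congr rfl fun i _ => by rw [hzfz]
    rw [hunion, measure_iUnion hFdis hFmeas]
    simp_rw [hPrF]
    rw [ENNReal.tsum_mul_right, hX0, one_mul]
  -- events for prefixes of Z are measurable
  have hEmeas : ∀ (n : ℕ) (z : Fin n → S),
      MeasurableSet {ω | ∀ i : Fin n, Z (↑i + 1) ω = z i} := by
    intro n z
    have : {ω | ∀ i : Fin n, Z (↑i + 1) ω = z i}
        = ⋂ i : Fin n, Z (↑i + 1) ⁻¹' {z i} := by
      ext ω; simp [Set.mem_iInter]
    rw [this]
    exact MeasurableSet.iInter fun i => hZmeas ↑i (measurableSet_singleton _)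
  -- prefix events with fixed length are pairwise disjoint
  have hEdis : ∀ n : ℕ, Pairwise (Function.onFun Disjoint
      fun z : Fin n → S => {ω | ∀ i : Fin n, Z (↑i + 1) ω = z i}) := by
    intro n z z' hzz'
    rw [Function.onFun, Set.disjoint_left]
    intro ω h1 h2
    exact hzz' (funext fun i => (h1 i).symm.trans (h2 i))
  -- prefix events cover everything
  have hEcov : ∀ n : ℕ,
      (⋃ z : Fin n → S, {ω | ∀ i : Fin n, Z (↑i + 1) ω = z i}) = Set.univ := by
    intro n
    ext ω
    simp only [Set.mem_iUnion, Set.mem_setOf_eq, Set.mem_univ, iff_true]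
    exact ⟨fun i => Z (↑i + 1) ω, fun i => rfl⟩
  -- hence the products sum to 1
  have hsum1 : ∀ n : ℕ, ∑' z : Fin n → S, ∏ i : Fin n, μ (z i) = 1 := by
    intro n
    have : ∀ z : Fin n → S, ∏ i : Fin n, μ (z i)
        = Pr {ω | ∀ i : Fin n, Z (↑i + 1) ω = z i} := fun z => (keyA n z).symm
    simp_rw [this]
    rw [← measure_iUnion (hEdis n) (hEmeas n), hEcov, measure_univ]
  refine ⟨?_, keyA, ?_⟩
  · -- identical distribution
    intro t c
    have hEeq : {ω | Z (t + 1) ω = c}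
        = ⋃ z : Fin t → S, {ω | ∀ i : Fin (t + 1), Z (↑i + 1) ω = (Fin.snoc z c : Fin (t + 1) → S) i} := by
      ext ω
      simp only [Set.mem_iUnion, Set.mem_setOf_eq]
      constructor
      · intro hω
        refine ⟨fun i => Z (↑i + 1) ω, fun i => ?_⟩
        induction i using Fin.lastCases with
        | last => simpa [Fin.snoc_last] using hω
        | cast j => simp [Fin.snoc_castSucc]
      · rintro ⟨z, hz⟩
        have := hz (Fin.last t)
        simpa [Fin.snoc_last] using this
    rw [hEeq, measure_iUnion ?hd ?hm]
    case hm => exact fun z => hEmeas (t + 1) (Fin.snoc z c)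
    case hd =>
      intro z z' hzz'
      rw [Function.onFun, Set.disjoint_left]
      intro ω h1 h2
      refine hzz' (funext fun i => ?_)
      have e1 := h1 (Fin.castSucc i)
      have e2 := h2 (Fin.castSucc i)
      rw [Fin.snoc_castSucc] at e1 e2
      exact e1.symm.trans e2
    have : ∀ z : Fin t → S,
        Pr {ω | ∀ i : Fin (t + 1), Z (↑i + 1) ω = (Fin.snoc z c : Fin (t + 1) → S) i}
          = (∏ i : Fin t, μ (z i)) * μ c := by
      intro z
      rw [keyA (t + 1) (Fin.snoc z c), Fin.prod_univ_castSucc]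
      simp [Fin.snoc_castSucc, Fin.snoc_last]
    simp_rw [this]
    rw [ENNReal.tsum_mul_right, hsum1, one_mul]
  · -- X determined by X 0 and Z
    intro t ω
    rw [hZ t ω, Equiv.symm_apply_apply]
end
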